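/- Let X = (x₀,…,x_{d+1}) ∈ H^{d+2} with min(X) > 0 and min(X) ≥ λ·diam(X) for some 0 < λ ≤ 1. Then for any two indices 0 ≤ i, j ≤ d+1, p_d sin_{x_i}(X) ≥ λ^{d(d+1)/2} · p_d sin_{x_j}(X). -/

import Mathlib

open Metric Finset

noncomputable section

/-- n! times the n-volume of the simplex on y₀,…,y_n (Gram determinant form). -/
def simplexContent {H : Type*} [NormedAddCommGroup H] [InnerProductSpace ℝ H]
    (n : ℕ) (y : Fin (n + 1) → H) : ℝ :=
  Real.sqrt (Matrix.det (Matrix.of fun i j : Fin n =>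
    (inner ℝ (y i.succ - y 0) (y j.succ - y 0) : ℝ)))

/-- The polar sine of X at the vertex X i. -/
def polarSin {H : Type*} [NormedAddCommGroup H] [InnerProductSpace ℝ H]
    {n : ℕ} (X : Fin (n + 2) → H) (i : Fin (n + 2)) : ℝ :=
  simplexContent (n + 1) X / ∏ j ∈ Finset.univ.erase i, dist (X j) (X i)

/-- The smallest pairwise distance among the coordinates of X. -/
def tmin {H : Type*} [PseudoMetricSpace H] {n : ℕ} (X : Fin n → H) : ℝ :=
  sInf {r | ∃ i j, i ≠ j ∧ r = dist (X i) (X j)}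

/-- The largest pairwise distance among the coordinates of X. -/
def tdiam {H : Type*} [PseudoMetricSpace H] {n : ℕ} (X : Fin n → H) : ℝ :=
  Metric.diam (Set.range X)

/-!
All polar sines of `X` share the numerator `M_{d+1}(X)`, so comparing `p_d sin_{x_i}` with
`p_d sin_{x_j}` means comparing the products of the distances from `x_j` and from `x_i` to the
other vertices. Both products contain `‖x_i - x_j‖`; each of the remaining `d` factors
`‖x_k - x_i‖ ≤ diam X` is at most `λ⁻¹` times `‖x_k - x_j‖ ≥ min X`. This gives the bound with
`λ^d`, which is stronger since `d ≤ d(d+1)/2` and `λ ≤ 1`.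
-/

section Distances

variable {H : Type*} [PseudoMetricSpace H]

theorem pow_mul_prod_dist_erase_le {ι : Type*} [Fintype ι] [DecidableEq ι] {X : ι → H} {l : ℝ}
    (hl : 0 ≤ l) {i j : ι} (hij : i ≠ j)
    (h : ∀ k, k ≠ i → k ≠ j → l * dist (X k) (X i) ≤ dist (X k) (X j)) :
    l ^ (Fintype.card ι - 2) * ∏ k ∈ univ.erase i, dist (X k) (X i) ≤
      ∏ k ∈ univ.erase j, dist (X k) (X j) := by
  have hji : j ∈ univ.erase i := mem_erase.mpr ⟨hij.symm, mem_univ j⟩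
  have hij' : i ∈ univ.erase j := mem_erase.mpr ⟨hij, mem_univ i⟩
  set S := (univ.erase i).erase j
  have hcard : S.card = Fintype.card ι - 2 := by
    rw [card_erase_of_mem hji, card_erase_of_mem (mem_univ i), card_univ]
    omega
  have hcommon : l ^ (Fintype.card ι - 2) * ∏ k ∈ S, dist (X k) (X i) ≤
      ∏ k ∈ S, dist (X k) (X j) := by
    rw [← hcard, ← prod_const, ← prod_mul_distrib]
    refine prod_le_prod (fun k _ => by positivity) fun k hk => ?_
    obtain ⟨hkj, hki⟩ := mem_erase.mp hk
    exact h k (mem_erase.mp hki).1 hkj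
  rw [← prod_erase_mul _ _ hji, ← prod_erase_mul _ _ hij', erase_right_comm (a := j),
    dist_comm (X i) (X j), ← mul_assoc]
  exact mul_le_mul_of_nonneg_right hcommon dist_nonneg

theorem tmin_le_dist {n : ℕ} (X : Fin n → H) {a b : Fin n} (hab : a ≠ b) :
    tmin X ≤ dist (X a) (X b) :=
  csInf_le ⟨0, by rintro r ⟨_, _, _, rfl⟩; exact dist_nonneg⟩ ⟨a, b, hab, rfl⟩

theorem dist_le_tdiam {n : ℕ} (X : Fin n → H) (a b : Fin n) : dist (X a) (X b) ≤ tdiam X :=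
  dist_le_diam_of_mem (Set.finite_range X).isBounded ⟨a, rfl⟩ ⟨b, rfl⟩

theorem prod_dist_erase_pos {n : ℕ} {X : Fin n → H} (hmin : 0 < tmin X) (i : Fin n) :
    0 < ∏ k ∈ univ.erase i, dist (X k) (X i) :=
  prod_pos fun _ hk => hmin.trans_le (tmin_le_dist X (mem_erase.mp hk).1)

end Distances

section PolarSine

variable {H : Type*} [NormedAddCommGroup H] [InnerProductSpace ℝ H]

theorem polarSin_nonneg {n : ℕ} (X : Fin (n + 2) → H) (i : Fin (n + 2)) : 0 ≤ polarSin X i :=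
  div_nonneg (Real.sqrt_nonneg _) (prod_nonneg fun _ _ => dist_nonneg)

theorem pow_mul_polarSin_le {d : ℕ} {X : Fin (d + 2) → H} {l : ℝ} (hl0 : 0 < l) (hl1 : l ≤ 1)
    (hmin : 0 < tmin X) (hsep : l * tdiam X ≤ tmin X) (i j : Fin (d + 2)) :
    l ^ d * polarSin X j ≤ polarSin X i := by
  have hprod : l ^ d * ∏ k ∈ univ.erase i, dist (X k) (X i) ≤
      ∏ k ∈ univ.erase j, dist (X k) (X j) := by
    rcases eq_or_ne i j with rfl | hij
    · exact mul_le_of_le_one_left (prod_dist_erase_pos hmin i).le (pow_le_one₀ hl0.le hl1)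
    · simpa using pow_mul_prod_dist_erase_le hl0.le hij fun k _ hkj =>
        calc l * dist (X k) (X i) ≤ l * tdiam X := by gcongr; exact dist_le_tdiam X k i
          _ ≤ tmin X := hsep
          _ ≤ dist (X k) (X j) := tmin_le_dist X hkj
  unfold polarSin
  rw [← mul_div_assoc, div_le_div_iff₀ (prod_dist_erase_pos hmin j) (prod_dist_erase_pos hmin i)]
  calc l ^ d * simplexContent (d + 1) X * ∏ k ∈ univ.erase i, dist (X k) (X i)
      = simplexContent (d + 1) X * (l ^ d * ∏ k ∈ univ.erase i, dist (X k) (X i)) := by ring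
    _ ≤ simplexContent (d + 1) X * ∏ k ∈ univ.erase j, dist (X k) (X j) :=
      mul_le_mul_of_nonneg_left hprod (Real.sqrt_nonneg _)

end PolarSine

theorem rpow_triangle_le_pow {l : ℝ} (hl0 : 0 < l) (hl1 : l ≤ 1) (d : ℕ) :
    l ^ ((d * (d + 1) : ℝ) / 2) ≤ l ^ d := by
  rw [← Real.rpow_natCast]
  refine Real.rpow_le_rpow_of_exponent_ge hl0 hl1 ?_
  rcases d with _ | d
  · simp
  · push_cast
    nlinarith

theorem polarSin_comparable_general {H : Type*} [NormedAddCommGroup H] [InnerProductSpace ℝ H]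
    (d : ℕ) (X : Fin (d + 2) → H)
    (l : ℝ) (hl0 : 0 < l) (hl1 : l ≤ 1)
    (hmin : 0 < tmin X) (hsep : l * tdiam X ≤ tmin X) (i j : Fin (d + 2)) :
    l ^ ((d * (d + 1) : ℝ) / 2) * polarSin X j ≤ polarSin X i :=
  calc l ^ ((d * (d + 1) : ℝ) / 2) * polarSin X j ≤ l ^ d * polarSin X j :=
        mul_le_mul_of_nonneg_right (rpow_triangle_le_pow hl0 hl1 d) (polarSin_nonneg X j)
    _ ≤ polarSin X i := pow_mul_polarSin_le hl0 hl1 hmin hsep i j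

/-- If min(X) > 0 and min(X) ≥ λ·diam(X) with 0 < λ ≤ 1, then for any vertices i, j,
p_d sin_{x_i}(X) ≥ λ^{d(d+1)/2}·p_d sin_{x_j}(X). -/
theorem polarSin_comparable {H : Type*} [NormedAddCommGroup H] [InnerProductSpace ℝ H]
    (d : ℕ) (hd : 1 ≤ d) (X : Fin (d + 2) → H)
    (l : ℝ) (hl0 : 0 < l) (hl1 : l ≤ 1)
    (hmin : 0 < tmin X) (hsep : l * tdiam X ≤ tmin X) (i j : Fin (d + 2)) :
    l ^ ((d * (d + 1) : ℝ) / 2) * polarSin X j ≤ polarSin X i :=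
  polarSin_comparable_general d X l hl0 hl1 hmin hsep i j
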